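/- Let E be an exact category with enough projectives. Then the monomorphism category MMor_k(E) has enough projectives: for every object (X•, α•) in MMor_k(E) there is an admissible epimorphism from a projective object of MMor_k(E) onto X•. -/

import Mathlib

open CategoryTheory Limits

universe v u

/-- An exact structure (in the sense of Quillen/Bühler) on an additive category `E`:
a class of kernel–cokernel pairs (`ses f g` meaning `X ↣ Y ↠ Z` is an admissible short
exact sequence), closed under isomorphism, such that admissible monomorphisms (resp.
epimorphisms) contain identities, are closed under composition, and are stable under
pushout (resp. pullback). -/
structure ExactStructure (E : Type u) [Category.{v} E] [Preadditive E] [HasZeroObject E] where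
  ses : ∀ ⦃X Y Z : E⦄, (X ⟶ Y) → (Y ⟶ Z) → Prop
  comp_zero : ∀ {X Y Z : E} {f : X ⟶ Y} {g : Y ⟶ Z}, ses f g → f ≫ g = 0
  isKernel : ∀ {X Y Z : E} {f : X ⟶ Y} {g : Y ⟶ Z} (h : ses f g),
      Nonempty (IsLimit (KernelFork.ofι f (comp_zero h)))
  isCokernel : ∀ {X Y Z : E} {f : X ⟶ Y} {g : Y ⟶ Z} (h : ses f g),
      Nonempty (IsColimit (CokernelCofork.ofπ g (comp_zero h)))
  iso_closed : ∀ {X Y Z X' Y' Z' : E} {f : X ⟶ Y} {g : Y ⟶ Z}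
      (eX : X ≅ X') (eY : Y ≅ Y') (eZ : Z ≅ Z') {f' : X' ⟶ Y'} {g' : Y' ⟶ Z'},
      f ≫ eY.hom = eX.hom ≫ f' → g ≫ eZ.hom = eY.hom ≫ g' → ses f g → ses f' g'
  id_mono : ∀ X : E, ∃ (Z : E) (g : X ⟶ Z), ses (𝟙 X) g
  id_epi : ∀ X : E, ∃ (W : E) (f : W ⟶ X), ses f (𝟙 X)
  mono_comp : ∀ {X Y Z : E} {f : X ⟶ Y} {g : Y ⟶ Z},
      (∃ (W : E) (h : Y ⟶ W), ses f h) → (∃ (W : E) (h : Z ⟶ W), ses g h) →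
      ∃ (W : E) (h : Z ⟶ W), ses (f ≫ g) h
  epi_comp : ∀ {X Y Z : E} {f : X ⟶ Y} {g : Y ⟶ Z},
      (∃ (W : E) (h : W ⟶ X), ses h f) → (∃ (W : E) (h : W ⟶ Y), ses h g) →
      ∃ (W : E) (h : W ⟶ X), ses h (f ≫ g)
  mono_pushout : ∀ {X Y Z : E} (f : X ⟶ Y) (t : X ⟶ Z),
      (∃ (W : E) (g : Y ⟶ W), ses f g) →
      ∃ (P : E) (f' : Z ⟶ P) (t' : Y ⟶ P), IsPushout t f f' t' ∧
        ∃ (W : E) (g : P ⟶ W), ses f' g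
  epi_pullback : ∀ {X Y Z : E} (g : Y ⟶ X) (t : Z ⟶ X),
      (∃ (W : E) (f : W ⟶ Y), ses f g) →
      ∃ (P : E) (g' : P ⟶ Z) (t' : P ⟶ Y), IsPullback g' t' t g ∧
        ∃ (W : E) (f : W ⟶ P), ses f g'

namespace ExactStructure

variable {E : Type u} [Category.{v} E] [Preadditive E] [HasZeroObject E]
variable (S : ExactStructure E)

/-- `f` is an admissible monomorphism. -/
def AdmMono {X Y : E} (f : X ⟶ Y) : Prop := ∃ (Z : E) (g : Y ⟶ Z), S.ses f g

/-- `g` is an admissible epimorphism. -/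
def AdmEpi {Y Z : E} (g : Y ⟶ Z) : Prop := ∃ (X : E) (f : X ⟶ Y), S.ses f g

/-- An object of `E` is injective (w.r.t. the exact structure). -/
def EInjective (I : E) : Prop :=
  ∀ ⦃X Y : E⦄ (f : X ⟶ Y), S.AdmMono f → ∀ u : X ⟶ I, ∃ v : Y ⟶ I, f ≫ v = u

/-- An object of `E` is projective (w.r.t. the exact structure). -/
def EProjective (P : E) : Prop :=
  ∀ ⦃Y Z : E⦄ (g : Y ⟶ Z), S.AdmEpi g → ∀ u : P ⟶ Z, ∃ v : P ⟶ Y, v ≫ g = u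

/-- An object of the monomorphism category `MMor_k(E)`: a diagram of `k` composable
admissible monomorphisms in `E`. -/
structure MMorObj (k : ℕ) where
  obj : Fin (k + 1) → E
  map : ∀ i : Fin k, obj i.castSucc ⟶ obj i.succ
  adm : ∀ i, S.AdmMono (map i)

/-- A morphism in the monomorphism category `MMor_k(E)`. -/
structure MMorHom {k : ℕ} (X Y : S.MMorObj k) where
  app : ∀ i, X.obj i ⟶ Y.obj i
  comm : ∀ i : Fin k, X.map i ≫ app i.succ = app i.castSucc ≫ Y.map i

variable {S}

/-- A componentwise admissible short exact sequence in `MMor_k(E)`. -/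
def MMorSes {k : ℕ} {X Y Z : S.MMorObj k} (f : S.MMorHom X Y) (g : S.MMorHom Y Z) : Prop :=
  ∀ i, S.ses (f.app i) (g.app i)

/-- Admissible monomorphisms of `MMor_k(E)`. -/
def MMorAdmMono {k : ℕ} {X Y : S.MMorObj k} (f : S.MMorHom X Y) : Prop :=
  ∃ (Z : S.MMorObj k) (g : S.MMorHom Y Z), MMorSes f g

/-- Admissible epimorphisms of `MMor_k(E)`. -/
def MMorAdmEpi {k : ℕ} {Y Z : S.MMorObj k} (g : S.MMorHom Y Z) : Prop :=
  ∃ (X : S.MMorObj k) (f : S.MMorHom X Y), MMorSes f g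

/-- Injective objects of the exact category `MMor_k(E)`. -/
def MMorInjective {k : ℕ} (I : S.MMorObj k) : Prop :=
  ∀ ⦃X Y : S.MMorObj k⦄ (f : S.MMorHom X Y), MMorAdmMono f →
    ∀ u : S.MMorHom X I, ∃ v : S.MMorHom Y I, ∀ i, f.app i ≫ v.app i = u.app i

/-- Projective objects of the exact category `MMor_k(E)`. -/
def MMorProjective {k : ℕ} (P : S.MMorObj k) : Prop :=
  ∀ ⦃Y Z : S.MMorObj k⦄ (g : S.MMorHom Y Z), MMorAdmEpi g →
    ∀ u : S.MMorHom P Z, ∃ v : S.MMorHom P Y, ∀ i, v.app i ≫ g.app i = u.app i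

end ExactStructure

/-!
Build admissible projective presentations `Kᵢ ↣ Qᵢ ↠ Xᵢ` level by level. Given the one at level
`i` and any presentation `K' ↣ P ↠ Xᵢ₊₁`, put `Qᵢ₊₁ = Qᵢ ⊞ P`, mapping to `Xᵢ₊₁` by
`(πᵢ ≫ αᵢ, p)`. A lift `w : Qᵢ ⟶ P` of `πᵢ ≫ αᵢ` through `p` shears this map into `(0, p)`, whose
kernel is `Qᵢ ⊞ K'`; the kernels are linked by `(ιᵢ, m) : Kᵢ ⟶ Qᵢ ⊞ K'` with `m ≫ ι' = ιᵢ ≫ w`,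
an admissible mono up to a shear. The diagram `Q•` is projective in `MMor_k(E)` because its
maps `Qᵢ ⟶ Qᵢ ⊞ P` have projective cokernels, so lifts against admissible epimorphisms extend
one level at a time.
-/

theorem Fin.exists_chain {k : ℕ} {α : Fin (k + 1) → Sort*}
    (R : ∀ i : Fin k, α i.castSucc → α i.succ → Prop) (a₀ : α 0)
    (step : ∀ i a, ∃ b, R i a b) :
    ∃ f : ∀ i, α i, ∀ i, R i (f i.castSucc) (f i.succ) := by
  choose next hnext using step
  exact ⟨Fin.induction a₀ next, fun i => by simpa using hnext i _⟩

namespace ExactStructure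

open ZeroObject

variable {E : Type u} [Category.{v} E] [Preadditive E] [HasZeroObject E] {S : ExactStructure E}

theorem ses_of_isColimit {X Y Z Z' : E} {f : X ⟶ Y} {g : Y ⟶ Z} (h : S.ses f g)
    {g' : Y ⟶ Z'} (w : f ≫ g' = 0) (hc : IsColimit (CokernelCofork.ofπ g' w)) :
    S.ses f g' := by
  obtain ⟨c⟩ := S.isCokernel h
  have he : g ≫ (c.coconePointUniqueUpToIso hc).hom = g' := by
    simpa using c.comp_coconePointUniqueUpToIso_hom hc WalkingParallelPair.one
  exact S.iso_closed (Iso.refl X) (Iso.refl Y) (c.coconePointUniqueUpToIso hc)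
    (by simp) (by simpa using he) h

theorem ses_of_isLimit {X X' Y Z : E} {f : X ⟶ Y} {g : Y ⟶ Z} (h : S.ses f g)
    {f' : X' ⟶ Y} (w : f' ≫ g = 0) (hc : IsLimit (KernelFork.ofι f' w)) :
    S.ses f' g := by
  obtain ⟨c⟩ := S.isKernel h
  have he : (c.conePointUniqueUpToIso hc).hom ≫ f' = f := by
    simpa using c.conePointUniqueUpToIso_hom_comp hc WalkingParallelPair.zero
  exact S.iso_closed (c.conePointUniqueUpToIso hc) (Iso.refl Y) (Iso.refl Z)
    (by simpa using he.symm) (by simp) h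

theorem ses_comp_iso {X Y Y' Z : E} {f : X ⟶ Y} {g : Y ⟶ Z} (h : S.ses f g) (e : Y ≅ Y') :
    S.ses (f ≫ e.hom) (e.inv ≫ g) :=
  S.iso_closed (Iso.refl X) e (Iso.refl Z) (by simp) (by simp) h

theorem AdmMono.comp {X Y Z : E} {f : X ⟶ Y} {g : Y ⟶ Z} (hf : S.AdmMono f)
    (hg : S.AdmMono g) : S.AdmMono (f ≫ g) :=
  S.mono_comp hf hg

theorem AdmEpi.comp {X Y Z : E} {f : X ⟶ Y} {g : Y ⟶ Z} (hf : S.AdmEpi f)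
    (hg : S.AdmEpi g) : S.AdmEpi (f ≫ g) :=
  S.epi_comp hf hg

theorem admMono_iso_hom {X Y : E} (e : X ≅ Y) : S.AdmMono e.hom := by
  obtain ⟨Z, g, h⟩ := S.id_mono X
  exact ⟨Z, e.inv ≫ g, by simpa using ses_comp_iso h e⟩

variable (S) in
theorem ses_zero_id (X : E) : S.ses (0 : (0 : E) ⟶ X) (𝟙 X) := by
  obtain ⟨W, f, h⟩ := S.id_epi X
  exact ses_of_isLimit h (by simp) (zeroKernelOfCancelZero _ fun _ g hg => by simpa using hg)

theorem hasBinaryBiproducts (S : ExactStructure E) : HasBinaryBiproducts E := by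
  have : ∀ {X Y : E}, HasColimit (pair X Y) := by
    intro X Y
    obtain ⟨P, f', t', hpo, -⟩ :=
      S.mono_pushout (0 : (0 : E) ⟶ Y) (0 : (0 : E) ⟶ X) ⟨Y, 𝟙 Y, S.ses_zero_id Y⟩
    exact HasColimit.mk ⟨BinaryCofan.mk f' t',
      BinaryCofan.IsColimit.mk _ (fun u v => hpo.desc u v ((isZero_zero E).eq_of_src _ _))
        (fun _ _ => hpo.inl_desc _ _ _) (fun _ _ => hpo.inr_desc _ _ _)
        (fun u v m h₁ h₂ => hpo.hom_ext (by rwa [hpo.inl_desc]) (by rwa [hpo.inr_desc]))⟩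
  have := hasBinaryCoproducts_of_hasColimit_pair E
  exact HasBinaryBiproducts.of_hasBinaryCoproducts

variable (S) in
def admEpis : MorphismProperty E := fun _ _ g => S.AdmEpi g

section Biproducts

variable [HasBinaryBiproducts E]

variable (S) in
theorem ses_inl_snd (A B : E) : S.ses (biprod.inl : A ⟶ A ⊞ B) biprod.snd := by
  obtain ⟨P, f', t', hpo, W, g, hg⟩ :=
    S.mono_pushout (0 : (0 : E) ⟶ B) (0 : (0 : E) ⟶ A) ⟨B, 𝟙 B, S.ses_zero_id B⟩
  have h := ses_comp_iso hg (hpo.isoIsPushout _ _ (IsPushout.of_has_biproduct A B))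
  rw [IsPushout.inl_isoIsPushout_hom] at h
  exact ses_of_isColimit h biprod.inl_snd (biprod.isCokernelInlCokernelFork A B)

theorem ses_biprod_map_id {X Y Z : E} {f : X ⟶ Y} {g : Y ⟶ Z} (A : E) (h : S.ses f g) :
    S.ses (biprod.map (𝟙 A) f) (biprod.snd ≫ g) := by
  obtain ⟨W, j, hj⟩ := AdmEpi.comp ⟨_, _, S.ses_inl_snd A Y⟩ ⟨_, _, h⟩
  obtain ⟨hf⟩ := S.isKernel h
  have : Mono f := mono_of_isLimit_fork hf
  refine ses_of_isLimit hj (by simp [S.comp_zero h]) (KernelFork.IsLimit.ofι' _ _ fun t ht => ?_)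
  obtain ⟨l, hl⟩ := KernelFork.IsLimit.lift' hf (t ≫ biprod.snd) (by simpa using ht)
  exact ⟨biprod.lift (t ≫ biprod.fst) l, by ext <;> simp [show l ≫ f = _ from hl]⟩

theorem admMono_biprod_map_id {X Y : E} {f : X ⟶ Y} (hf : S.AdmMono f) (B : E) :
    S.AdmMono (biprod.map f (𝟙 B)) := by
  obtain ⟨Z, g, h⟩ := hf
  have := ((admMono_iso_hom (biprod.braiding _ _)).comp ⟨_, _, ses_biprod_map_id B h⟩).comp
    (admMono_iso_hom (biprod.braiding _ _))
  rwa [Category.assoc, biprod.braiding_map_braiding] at this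

theorem admMono_biprod_lift_id {A B : E} (m : A ⟶ B) : S.AdmMono (biprod.lift (𝟙 A) m) := by
  have : biprod.lift (𝟙 A) m = biprod.inl ≫ (Biprod.unipotentUpper m).hom := by ext <;> simp
  exact this ▸ AdmMono.comp ⟨_, _, S.ses_inl_snd A B⟩ (admMono_iso_hom _)

theorem EProjective.biprod {A B : E} (hA : S.EProjective A) (hB : S.EProjective B) :
    S.EProjective (A ⊞ B) := by
  intro Y Z g hg u
  obtain ⟨v₁, hv₁⟩ := hA g hg (biprod.inl ≫ u)
  obtain ⟨v₂, hv₂⟩ := hB g hg (biprod.inr ≫ u)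
  exact ⟨biprod.desc v₁ v₂, by ext <;> simp [hv₁, hv₂]⟩

theorem admEpis_llp_inl {A B : E} (hB : S.EProjective B) :
    S.admEpis.llp (biprod.inl : A ⟶ A ⊞ B) := by
  intro Y Z g hg
  refine ⟨fun {t u} sq => ?_⟩
  obtain ⟨v, hv⟩ := hB g hg (biprod.inr ≫ u)
  exact ⟨⟨⟨biprod.desc t v, by simp, by ext <;> simp [hv, sq.w]⟩⟩⟩

variable (S) in
structure EProjectivePresentation (A : E) where
  Q : E
  K : E
  ι : K ⟶ Q
  π : Q ⟶ A
  ses : S.ses ι π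
  projective : S.EProjective Q

def EProjectivePresentation.Extends {A B : E} (a : S.EProjectivePresentation A)
    (b : S.EProjectivePresentation B) (f : A ⟶ B) : Prop :=
  ∃ (σ : a.Q ⟶ b.Q) (κ : a.K ⟶ b.K), S.AdmMono σ ∧ S.admEpis.llp σ ∧ S.AdmMono κ ∧
    σ ≫ b.π = a.π ≫ f ∧ κ ≫ b.ι = a.ι ≫ σ

theorem EProjectivePresentation.exists_extends {A B : E} (a : S.EProjectivePresentation A)
    (f : A ⟶ B) (c : S.EProjectivePresentation B) :
    ∃ b : S.EProjectivePresentation B, a.Extends b f := by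
  obtain ⟨w, hw⟩ := a.projective c.π ⟨_, _, c.ses⟩ (a.π ≫ f)
  obtain ⟨m, hm⟩ := KernelFork.IsLimit.lift' (S.isKernel c.ses).some (a.ι ≫ w)
    (by rw [Category.assoc, hw, ← Category.assoc, S.comp_zero a.ses, zero_comp])
  have hses : S.ses (biprod.map (𝟙 a.Q) c.ι ≫ (Biprod.unipotentUpper w).inv)
      (biprod.desc (a.π ≫ f) c.π) := by
    have hπ : biprod.desc (a.π ≫ f) c.π = (Biprod.unipotentUpper w).hom ≫ biprod.snd ≫ c.π := by
      ext <;> simp [Biprod.ofComponents, hw]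
    exact hπ ▸ ses_comp_iso (ses_biprod_map_id a.Q c.ses) (Biprod.unipotentUpper w).symm
  have hκ : biprod.lift a.ι m = biprod.lift (𝟙 a.K) m ≫ biprod.map a.ι (𝟙 c.K) := by
    ext <;> simp
  refine ⟨⟨_, _, _, _, hses, a.projective.biprod c.projective⟩, biprod.inl,
    biprod.lift a.ι m, ⟨_, _, S.ses_inl_snd _ _⟩, admEpis_llp_inl c.projective,
    hκ ▸ (admMono_biprod_lift_id m).comp (admMono_biprod_map_id ⟨_, _, a.ses⟩ _), by simp, ?_⟩
  ext <;> simp [show m ≫ c.ι = _ from hm]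

end Biproducts

theorem mmorProjective_of_llp {k : ℕ} (P : S.MMorObj k) (h₀ : S.EProjective (P.obj 0))
    (h : ∀ i, S.admEpis.llp (P.map i)) : MMorProjective P := by
  rintro Y Z g ⟨W, j, hj⟩ u
  have hg : ∀ i, S.AdmEpi (g.app i) := fun i => ⟨_, _, hj i⟩
  obtain ⟨v₀, hv₀⟩ := h₀ _ (hg 0) (u.app 0)
  obtain ⟨v, hv⟩ := Fin.exists_chain
    (α := fun i => {v : P.obj i ⟶ Y.obj i // v ≫ g.app i = u.app i})
    (fun i a b => P.map i ≫ b.1 = a.1 ≫ Y.map i) ⟨v₀, hv₀⟩ fun i a => by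
      have sq : CommSq (a.1 ≫ Y.map i) (P.map i) (g.app i.succ) (u.app i.succ) :=
        ⟨by rw [Category.assoc, g.comm, ← Category.assoc, a.2, u.comm]⟩
      have := h i _ (hg i.succ)
      exact ⟨⟨sq.lift, sq.fac_right⟩, sq.fac_left⟩
  exact ⟨⟨fun i => (v i).1, hv⟩, fun i => (v i).2⟩

end ExactStructure

/-- If the exact category `E` has enough projectives, then so does the
monomorphism category `MMor_k(E)`: every object admits an admissible epimorphism from a
projective object of `MMor_k(E)`. -/
theorem mmor_enough_projectives
    {E : Type u} [Category.{v} E] [Preadditive E] [HasZeroObject E]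
    (S : ExactStructure E) (k : ℕ)
    (hE : ∀ X : E, ∃ (P : E) (p : P ⟶ X), S.EProjective P ∧ S.AdmEpi p) :
    ∀ X : S.MMorObj k, ∃ (P : S.MMorObj k) (p : S.MMorHom P X),
      ExactStructure.MMorProjective P ∧ ExactStructure.MMorAdmEpi p := by
  intro X
  have := S.hasBinaryBiproducts
  have pres (A : E) : Nonempty (S.EProjectivePresentation A) := by
    obtain ⟨Q, π, hQ, K, ι, h⟩ := hE A
    exact ⟨⟨Q, K, ι, π, h, hQ⟩⟩
  obtain ⟨D, hD⟩ := Fin.exists_chain (α := fun i => S.EProjectivePresentation (X.obj i))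
    (fun i a b => a.Extends b (X.map i)) (pres _).some
    fun i a => a.exists_extends (X.map i) (pres _).some
  choose σ κ hσ hlift hκ hπ hι using hD
  exact ⟨⟨_, σ, hσ⟩, ⟨fun i => (D i).π, hπ⟩,
    ExactStructure.mmorProjective_of_llp _ (D 0).projective hlift,
    ⟨_, κ, hκ⟩, ⟨fun i => (D i).ι, hι⟩, fun i => (D i).ses⟩
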